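/- (Axiomatic characterization of GCES.) Let p be a probabilistic database over D with endogenous/exogenous partition (D^en, D^ex), and let ψ be a function assigning to each monotone Boolean query Q : Finset D → {0,1} and each τ ∈ D^en a real number ψ_τ(Q). Suppose ψ satisfies: (DUM) if Δ(Q,W,τ) = 0 for every W ⊆ D^en \ {τ}, then ψ_τ(Q) = 0; (G-EFF) Σ_{τ ∈ D^en} ψ_τ(Q) = Σ_{W ⊊ D^en} Σ_{τ ∈ D^en \ W} Δ(Q,W,τ)·( p(W ∪ D^ex) + p(W ∪ D^ex ∪ {τ}) ); (G-SYM) if τ ≠ τ' and Δ(Q,W,τ) = Δ(Q,W,τ') = 0 for every W ⊆ D^en \ {τ,τ'}, then ψ_τ(Q) − Power^w(p,Q,τ) = ψ_{τ'}(Q) − Power^w(p,Q,τ'), where Power^w(p,Q,σ) := Σ_{W ⊆ D^en \ {σ}} Δ(Q,W,σ)·p(W ∪ D^ex); (LIN) ψ_τ(Q∨Q') + ψ_τ(Q∧Q') = ψ_τ(Q) + ψ_τ(Q') for all monotone Boolean Q, Q' and all τ ∈ D^en. Then ψ is unique, and ψ_τ(Q) = CE(p,Q,τ) for every monotone Boolean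 query Q and every τ ∈ D^en. -/

import Mathlib

open Finset

variable {ι : Type*} [Fintype ι] [DecidableEq ι]

/-- The positively intervened distribution `p^{+τ}`. Here the database `D` consists of all
the tuples of the finite type `ι`, and possible worlds are all `W : Finset ι`. -/
noncomputable def pPlus (p : Finset ι → ℝ) (τ : ι) (W : Finset ι) : ℝ :=
  ∑ W' ∈ Finset.univ.filter (fun W' : Finset ι => W' ∪ {τ} = W), p W'

/-- The negatively intervened distribution `p^{−τ}`. -/
noncomputable def pMinus (p : Finset ι → ℝ) (τ : ι) (W : Finset ι) : ℝ :=
  ∑ W' ∈ Finset.univ.filter (fun W' : Finset ι => W' \ {τ} = W), p W'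

/-- The generalized causal-effect score
`CE(p,Q,τ) = Σ_W p^{+τ}(W)·Q[W] − Σ_W p^{−τ}(W)·Q[W]`. -/
noncomputable def CE (p : Finset ι → ℝ) (Q : Finset ι → ℝ) (τ : ι) : ℝ :=
  ∑ W : Finset ι, pPlus p τ W * Q W - ∑ W : Finset ι, pMinus p τ W * Q W

/-- `Δ(Q,W,τ) = Q[W ∪ D^ex ∪ {τ}] − Q[W ∪ D^ex]`. -/
noncomputable def Delta (Dex : Finset ι) (Q : Finset ι → ℝ) (W : Finset ι) (τ : ι) : ℝ :=
  Q (W ∪ Dex ∪ {τ}) - Q (W ∪ Dex)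

/-- The weighted power `Power^w(p,Q,σ) = Σ_{W ⊆ D^en \ {σ}} Δ(Q,W,σ)·p(W ∪ D^ex)`. -/
noncomputable def Powerw (Den Dex : Finset ι) (p : Finset ι → ℝ)
    (Q : Finset ι → ℝ) (σ : ι) : ℝ :=
  ∑ W ∈ (Den.erase σ).powerset, Delta Dex Q W σ * p (W ∪ Dex)

/-- `Q` is a Boolean query: it takes values in `{0,1}`. -/
def IsBool (Q : Finset ι → ℝ) : Prop := ∀ W, Q W = 0 ∨ Q W = 1

/-- `Q` is a monotone query. -/
def IsMonotone (Q : Finset ι → ℝ) : Prop := ∀ W₁ W₂ : Finset ι, W₁ ⊆ W₂ → Q W₁ ≤ Q W₂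

/-!
Expanding the interventions gives `CE(p,Q,τ) = Σ_{U ⊆ D^en \ {τ}} Δ(Q,U,τ)·(p(U ∪ D^ex) +
p(U ∪ D^ex ∪ {τ}))`, from which CE visibly satisfies DUM, G-EFF, G-SYM and LIN. Hence
`φ = ψ − CE` satisfies DUM, LIN, plain symmetry and efficiency with total `0`, and it remains to see
that such a `φ` vanishes. On the unanimity query of `S` the tuples outside `S` are dummies and
those in `S` are pairwise symmetric, so they share one value, which must be `0`. A monotone
Boolean query generated by the sets `M ∋ S` is the join of the unanimity query of `S` and the query
generated by `M \ {S}`, and their meet is generated by `|M| - 1` sets, so LIN and induction on `|M|`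
finish the proof.
-/

section DeltaForm

variable {α : Type*} [DecidableEq α] (Den Dex : Finset α) (p Q : Finset α → ℝ)

noncomputable def deltaCE (τ : α) : ℝ :=
  ∑ U ∈ (Den.erase τ).powerset, Delta Dex Q U τ * (p (U ∪ Dex) + p (U ∪ Dex ∪ {τ}))

theorem deltaCE_eq_zero {τ : α} (h : ∀ W ⊆ Den.erase τ, Delta Dex Q W τ = 0) :
    deltaCE Den Dex p Q τ = 0 :=
  sum_eq_zero fun U hU => by rw [h U (mem_powerset.1 hU), zero_mul]

theorem sum_deltaCE :
    ∑ τ ∈ Den, deltaCE Den Dex p Q τ =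
      ∑ W ∈ Den.powerset.erase Den, ∑ τ ∈ Den \ W,
        Delta Dex Q W τ * (p (W ∪ Dex) + p (W ∪ Dex ∪ {τ})) := by
  refine (sum_comm' fun W τ => ?_).symm
  simp only [mem_erase, mem_powerset, mem_sdiff, subset_erase]
  constructor
  · rintro ⟨⟨-, hW⟩, hτ, hτW⟩
    exact ⟨⟨hW, hτW⟩, hτ⟩
  · rintro ⟨⟨hW, hτW⟩, hτ⟩
    exact ⟨⟨fun h => hτW (h ▸ hτ), hW⟩, hτ, hτW⟩

theorem deltaCE_max_add_min (Q' : Finset α → ℝ) (τ : α) :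
    deltaCE Den Dex p (fun W => max (Q W) (Q' W)) τ +
        deltaCE Den Dex p (fun W => min (Q W) (Q' W)) τ =
      deltaCE Den Dex p Q τ + deltaCE Den Dex p Q' τ := by
  simp only [deltaCE, ← sum_add_distrib]
  refine sum_congr rfl fun U _ => ?_
  simp only [Delta]
  linear_combination (p (U ∪ Dex) + p (U ∪ Dex ∪ {τ})) *
    (max_add_min (Q (U ∪ Dex ∪ {τ})) (Q' (U ∪ Dex ∪ {τ})) -
      max_add_min (Q (U ∪ Dex)) (Q' (U ∪ Dex)))

theorem deltaCE_sub_Powerw_eq_sum_pair {τ τ' : α} (hτ' : τ' ∈ Den) (hne : τ ≠ τ')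
    (h0 : ∀ W ⊆ Den \ {τ, τ'}, Delta Dex Q W τ = 0 ∧ Delta Dex Q W τ' = 0) :
    deltaCE Den Dex p Q τ - Powerw Den Dex p Q τ =
      ∑ V ∈ (Den \ {τ, τ'}).powerset,
        (Q (V ∪ Dex ∪ {τ, τ'}) - Q (V ∪ Dex)) * p (V ∪ Dex ∪ {τ, τ'}) := by
  have hDen : Den.erase τ = insert τ' (Den \ {τ, τ'}) := by
    ext x
    simp only [mem_erase, mem_insert, mem_sdiff, mem_singleton]
    by_cases hx : x = τ' <;> aesop
  have hτ'notMem : τ' ∉ Den \ {τ, τ'} := by simp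
  rw [deltaCE, Powerw, ← sum_sub_distrib, hDen, sum_powerset_insert hτ'notMem]
  -- Only worlds containing `τ'` contribute, and there `τ'` alone changes nothing.
  rw [sum_eq_zero fun V hV => by rw [(h0 V (mem_powerset.1 hV)).1]; ring, zero_add]
  refine sum_congr rfl fun V hV => ?_
  have hτ'V : Q (V ∪ Dex ∪ {τ'}) = Q (V ∪ Dex) := sub_eq_zero.1 (h0 V (mem_powerset.1 hV)).2
  have e1 : insert τ' V ∪ Dex ∪ {τ} = V ∪ Dex ∪ {τ, τ'} := by ext; simp; tauto
  have e2 : insert τ' V ∪ Dex = V ∪ Dex ∪ {τ'} := by ext; simp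
  rw [Delta, e1, e2, hτ'V]
  ring

theorem deltaCE_sub_Powerw_comm {τ τ' : α} (hτ : τ ∈ Den) (hτ' : τ' ∈ Den) (hne : τ ≠ τ')
    (h0 : ∀ W ⊆ Den \ {τ, τ'}, Delta Dex Q W τ = 0 ∧ Delta Dex Q W τ' = 0) :
    deltaCE Den Dex p Q τ - Powerw Den Dex p Q τ =
      deltaCE Den Dex p Q τ' - Powerw Den Dex p Q τ' := by
  have h0' : ∀ W ⊆ Den \ {τ', τ}, Delta Dex Q W τ' = 0 ∧ Delta Dex Q W τ = 0 := by
    rw [pair_comm]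
    exact fun W hW => (h0 W hW).symm
  rw [deltaCE_sub_Powerw_eq_sum_pair Den Dex p Q hτ' hne h0,
    deltaCE_sub_Powerw_eq_sum_pair Den Dex p Q hτ hne.symm h0', pair_comm]

end DeltaForm

theorem sum_sum_fiber_mul {β γ : Type*} [Fintype β] [Fintype γ] [DecidableEq γ]
    (g : β → γ) (p : β → ℝ) (f : γ → ℝ) :
    ∑ c, (∑ b ∈ univ.filter (fun b => g b = c), p b) * f c = ∑ b, p b * f (g b) := by
  rw [← sum_fiberwise univ g]
  refine sum_congr rfl fun c _ => ?_
  rw [sum_mul]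
  exact sum_congr rfl fun b hb => by rw [(mem_filter.1 hb).2]

theorem CE_eq_sum (p Q : Finset ι → ℝ) (τ : ι) :
    CE p Q τ = ∑ W, p W * (Q (W ∪ {τ}) - Q (W \ {τ})) := by
  simp only [CE, pPlus, pMinus, sum_sum_fiber_mul, mul_sub, sum_sub_distrib]

theorem sum_eq_sum_powerset_union {Den Dex : Finset ι} (hunion : Den ∪ Dex = univ)
    (hdisj : Disjoint Den Dex) {f : Finset ι → ℝ} (hf : ∀ W, ¬ Dex ⊆ W → f W = 0) :
    ∑ W, f W = ∑ V ∈ Den.powerset, f (V ∪ Dex) := by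
  have hinj : Set.InjOn (· ∪ Dex) (Den.powerset : Set (Finset ι)) := fun V hV V' hV' h => by
    rw [← union_sdiff_cancel_right (hdisj.mono_left (mem_powerset.1 hV)),
      ← union_sdiff_cancel_right (hdisj.mono_left (mem_powerset.1 hV')),
      show V ∪ Dex = V' ∪ Dex from h]
  rw [← sum_image hinj]
  refine (sum_subset (subset_univ _) fun W _ hW => hf W fun hDex => hW ?_).symm
  refine mem_image.2 ⟨W \ Dex, mem_powerset.2 fun x hx => ?_, sdiff_union_of_subset hDex⟩
  have hx' : x ∈ Den ∪ Dex := hunion ▸ mem_univ x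
  exact (mem_union.1 hx').resolve_right (mem_sdiff.1 hx).2

theorem CE_eq_deltaCE {Den Dex : Finset ι} (hunion : Den ∪ Dex = univ) (hdisj : Disjoint Den Dex)
    {p : Finset ι → ℝ} (hexo : ∀ W, ¬ Dex ⊆ W → p W = 0) (Q : Finset ι → ℝ) {τ : ι}
    (hτ : τ ∈ Den) : CE p Q τ = deltaCE Den Dex p Q τ := by
  rw [CE_eq_sum, sum_eq_sum_powerset_union hunion hdisj fun W hW => by rw [hexo W hW, zero_mul]]
  conv_lhs => rw [← insert_erase hτ, sum_powerset_insert (notMem_erase τ Den), ← sum_add_distrib]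
  refine sum_congr rfl fun U hU => ?_
  have hτX : τ ∉ U ∪ Dex := by
    simp [(subset_erase.1 (mem_powerset.1 hU)).2, disjoint_left.1 hdisj hτ]
  have e1 : (U ∪ Dex) \ {τ} = U ∪ Dex := by
    rw [sdiff_singleton_eq_erase, erase_eq_of_notMem hτX]
  have e2 : insert τ U ∪ Dex = U ∪ Dex ∪ {τ} := by ext; simp
  have e3 : (U ∪ Dex ∪ {τ}) \ {τ} = U ∪ Dex :=
    union_sdiff_cancel_right (disjoint_singleton_right.2 hτX)
  rw [e1, e2, e3, union_assoc _ {τ}, union_self, Delta]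
  ring

section Queries

variable {α : Type*} [DecidableEq α]

noncomputable def upIndicator (M : Finset (Finset α)) (W : Finset α) : ℝ :=
  if ∃ T ∈ M, T ⊆ W then 1 else 0

theorem isBool_upIndicator (M : Finset (Finset α)) : IsBool (upIndicator M) := by
  intro W
  unfold upIndicator
  split_ifs <;> simp

theorem isMonotone_upIndicator (M : Finset (Finset α)) : IsMonotone (upIndicator M) := by
  intro W₁ W₂ h
  unfold upIndicator
  split_ifs with h₁ h₂ <;> try norm_num
  obtain ⟨T, hT, hTW⟩ := h₁
  exact h₂ ⟨T, hT, hTW.trans h⟩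

theorem upIndicator_insert (S : Finset α) (M : Finset (Finset α)) (W : Finset α) :
    upIndicator (insert S M) W = max (upIndicator {S} W) (upIndicator M W) := by
  unfold upIndicator
  simp only [mem_insert, mem_singleton, exists_eq_or_imp, exists_eq_left]
  split_ifs <;> simp_all

theorem min_upIndicator (S : Finset α) (M : Finset (Finset α)) (W : Finset α) :
    min (upIndicator {S} W) (upIndicator M W) = upIndicator (M.image (S ∪ ·)) W := by
  unfold upIndicator
  simp only [mem_singleton, exists_eq_left, mem_image, exists_exists_and_eq_and, union_subset_iff]
  by_cases hS : S ⊆ W <;> by_cases hM : ∃ T ∈ M, T ⊆ W <;> simp [hS, hM]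

theorem eq_upIndicator [Fintype α] {Q : Finset α → ℝ} (hB : IsBool Q) (hM : IsMonotone Q) :
    Q = upIndicator (univ.filter (Q · = 1)) := by
  funext W
  unfold upIndicator
  simp only [mem_filter, mem_univ, true_and]
  split_ifs with h
  · obtain ⟨T, hT, hTW⟩ := h
    have := hM T W hTW
    rcases hB W with hW | hW <;> [linarith; exact hW]
  · exact (hB W).resolve_right fun hW => h ⟨W, hW, subset_rfl⟩

theorem upIndicator_singleton_eq_zero {S X : Finset α} {σ : α} (hσS : σ ∈ S) (hσX : σ ∉ X) :
    upIndicator {S} X = 0 := by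
  simp only [upIndicator, mem_singleton, exists_eq_left]
  exact if_neg fun h => hσX (h hσS)

theorem delta_upIndicator_singleton_of_notMem (Dex S W : Finset α) {τ : α} (hτ : τ ∉ S) :
    Delta Dex (upIndicator {S}) W τ = 0 := by
  simp only [Delta, upIndicator, mem_singleton, exists_eq_left, union_singleton,
    subset_insert_iff_of_notMem hτ, sub_self]

theorem delta_upIndicator_singleton_of_mem (Dex : Finset α) {S W : Finset α} {σ τ : α}
    (hσS : σ ∈ S) (hσW : σ ∉ W ∪ Dex) (hστ : σ ≠ τ) :
    Delta Dex (upIndicator {S}) W τ = 0 := by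
  have hσW' : σ ∉ W ∪ Dex ∪ {τ} := by simp_all
  rw [Delta, upIndicator_singleton_eq_zero hσS hσW, upIndicator_singleton_eq_zero hσS hσW',
    sub_self]

end Queries

section NullValue

variable {α : Type*} [DecidableEq α] {Den Dex : Finset α} {φ : (Finset α → ℝ) → α → ℝ}

theorem unanimity_eq_zero (hdisj : Disjoint Den Dex)
    (hdum : ∀ Q : Finset α → ℝ, IsBool Q → IsMonotone Q → ∀ τ ∈ Den,
      (∀ W ⊆ Den.erase τ, Delta Dex Q W τ = 0) → φ Q τ = 0)
    (heff : ∀ Q : Finset α → ℝ, IsBool Q → IsMonotone Q → ∑ τ ∈ Den, φ Q τ = 0)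
    (hsym : ∀ Q : Finset α → ℝ, IsBool Q → IsMonotone Q →
      ∀ τ ∈ Den, ∀ τ' ∈ Den, τ ≠ τ' →
      (∀ W ⊆ Den \ {τ, τ'}, Delta Dex Q W τ = 0 ∧ Delta Dex Q W τ' = 0) → φ Q τ = φ Q τ')
    (S : Finset α) {τ : α} (hτ : τ ∈ Den) : φ (upIndicator {S}) τ = 0 := by
  have hB := isBool_upIndicator {S}
  have hM := isMonotone_upIndicator {S}
  have hdummy : ∀ σ ∈ Den, σ ∉ S → φ (upIndicator {S}) σ = 0 := fun σ hσ hσS =>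
    hdum _ hB hM σ hσ fun W _ => delta_upIndicator_singleton_of_notMem Dex S W hσS
  by_cases hτS : τ ∈ S
  swap
  · exact hdummy τ hτ hτS
  -- Two players of `S` are symmetric: without both of them, `S` is never covered.
  have hequal : ∀ σ ∈ Den, σ ∈ S → φ (upIndicator {S}) σ = φ (upIndicator {S}) τ := by
    intro σ hσ hσS
    by_cases hστ : σ = τ
    · rw [hστ]
    refine hsym _ hB hM σ hσ τ hτ hστ fun W hW => ?_
    have hout : ∀ a ∈ Den, a ∈ ({σ, τ} : Finset α) → a ∉ W ∪ Dex := fun a ha haστ haW =>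
      (mem_union.1 haW).elim (fun h => (mem_sdiff.1 (hW h)).2 haστ)
        (disjoint_left.1 hdisj ha)
    exact ⟨delta_upIndicator_singleton_of_mem Dex hτS (hout τ hτ (by simp)) (Ne.symm hστ),
      delta_upIndicator_singleton_of_mem Dex hσS (hout σ hσ (by simp)) hστ⟩
  have hsum : ∑ σ ∈ Den, φ (upIndicator {S}) σ = #(Den.filter (· ∈ S)) • φ (upIndicator {S}) τ := by
    rw [← sum_const, sum_filter]
    refine sum_congr rfl fun σ hσ => ?_
    split_ifs with hσS
    · exact hequal σ hσ hσS
    · exact hdummy σ hσ hσS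
  have hcard : (#(Den.filter (· ∈ S)) : ℝ) ≠ 0 :=
    Nat.cast_ne_zero.2 (card_pos.2 ⟨τ, mem_filter.2 ⟨hτ, hτS⟩⟩).ne'
  rw [heff _ hB hM, nsmul_eq_mul] at hsum
  exact (mul_eq_zero.1 hsum.symm).resolve_left hcard

variable (hdisj : Disjoint Den Dex)
    (hdum : ∀ Q : Finset α → ℝ, IsBool Q → IsMonotone Q → ∀ τ ∈ Den,
      (∀ W ⊆ Den.erase τ, Delta Dex Q W τ = 0) → φ Q τ = 0)
    (heff : ∀ Q : Finset α → ℝ, IsBool Q → IsMonotone Q → ∑ τ ∈ Den, φ Q τ = 0)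
    (hsym : ∀ Q : Finset α → ℝ, IsBool Q → IsMonotone Q →
      ∀ τ ∈ Den, ∀ τ' ∈ Den, τ ≠ τ' →
      (∀ W ⊆ Den \ {τ, τ'}, Delta Dex Q W τ = 0 ∧ Delta Dex Q W τ' = 0) → φ Q τ = φ Q τ')
    (hlin : ∀ Q Q' : Finset α → ℝ, IsBool Q → IsMonotone Q → IsBool Q' → IsMonotone Q' →
      ∀ τ ∈ Den,
      φ (fun W => max (Q W) (Q' W)) τ + φ (fun W => min (Q W) (Q' W)) τ = φ Q τ + φ Q' τ)
include hdisj hdum heff hsym hlin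

theorem apply_upIndicator_eq_zero (M : Finset (Finset α)) {τ : α} (hτ : τ ∈ Den) :
    φ (upIndicator M) τ = 0 := by
  induction hn : #M using Nat.strong_induction_on generalizing M with
  | _ n ih =>
  obtain rfl | ⟨S, hS⟩ := M.eq_empty_or_nonempty
  · refine hdum _ (isBool_upIndicator ∅) (isMonotone_upIndicator ∅) τ hτ fun W _ => ?_
    simp [Delta, upIndicator]
  have hjoin : (fun W => max (upIndicator {S} W) (upIndicator (M.erase S) W)) = upIndicator M := by
    funext W
    rw [← upIndicator_insert, insert_erase hS]
  have hmeet : (fun W => min (upIndicator {S} W) (upIndicator (M.erase S) W)) =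
      upIndicator ((M.erase S).image (S ∪ ·)) := funext (min_upIndicator S (M.erase S))
  have hlt : #(M.erase S) < n := hn ▸ card_erase_lt_of_mem hS
  have hlin' := hlin _ _ (isBool_upIndicator {S}) (isMonotone_upIndicator {S})
    (isBool_upIndicator (M.erase S)) (isMonotone_upIndicator (M.erase S)) τ hτ
  rw [hjoin, hmeet, unanimity_eq_zero hdisj hdum heff hsym S hτ, ih _ hlt (M.erase S) rfl,
    ih _ (card_image_le.trans_lt hlt) ((M.erase S).image (S ∪ ·)) rfl] at hlin'
  linarith

theorem eq_zero_of_null_axioms [Fintype α] {Q : Finset α → ℝ} (hB : IsBool Q) (hM : IsMonotone Q)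
    {τ : α} (hτ : τ ∈ Den) : φ Q τ = 0 := by
  rw [eq_upIndicator hB hM]
  exact apply_upIndicator_eq_zero hdisj hdum heff hsym hlin _ hτ

end NullValue

theorem stmt7_general (Den Dex : Finset ι)
    (hunion : Den ∪ Dex = Finset.univ) (hdisj : Disjoint Den Dex)
    (p : Finset ι → ℝ)
    (hexo : ∀ W : Finset ι, ¬ Dex ⊆ W → p W = 0)
    (ψ : (Finset ι → ℝ) → ι → ℝ)
    (hDUM : ∀ Q : Finset ι → ℝ, IsBool Q → IsMonotone Q → ∀ τ ∈ Den,
      (∀ W ⊆ Den.erase τ, Delta Dex Q W τ = 0) → ψ Q τ = 0)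
    (hGEFF : ∀ Q : Finset ι → ℝ, IsBool Q → IsMonotone Q →
      ∑ τ ∈ Den, ψ Q τ =
        ∑ W ∈ Den.powerset.erase Den, ∑ τ ∈ Den \ W,
          Delta Dex Q W τ * (p (W ∪ Dex) + p (W ∪ Dex ∪ {τ})))
    (hGSYM : ∀ Q : Finset ι → ℝ, IsBool Q → IsMonotone Q →
      ∀ τ ∈ Den, ∀ τ' ∈ Den, τ ≠ τ' →
      (∀ W ⊆ Den \ {τ, τ'}, Delta Dex Q W τ = 0 ∧ Delta Dex Q W τ' = 0) →
      ψ Q τ - Powerw Den Dex p Q τ = ψ Q τ' - Powerw Den Dex p Q τ')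
    (hLIN : ∀ Q Q' : Finset ι → ℝ, IsBool Q → IsMonotone Q → IsBool Q' → IsMonotone Q' →
      ∀ τ ∈ Den,
      ψ (fun W => max (Q W) (Q' W)) τ + ψ (fun W => min (Q W) (Q' W)) τ =
        ψ Q τ + ψ Q' τ) :
    ∀ Q : Finset ι → ℝ, IsBool Q → IsMonotone Q → ∀ τ ∈ Den, ψ Q τ = CE p Q τ := by
  intro Q hB hM τ hτ
  rw [CE_eq_deltaCE hunion hdisj hexo Q hτ, ← sub_eq_zero]
  refine eq_zero_of_null_axioms (φ := fun Q τ => ψ Q τ - deltaCE Den Dex p Q τ) hdisj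
    ?_ ?_ ?_ ?_ hB hM hτ
  · intro Q hB hM τ hτ hΔ
    rw [hDUM Q hB hM τ hτ hΔ, deltaCE_eq_zero Den Dex p Q hΔ, sub_self]
  · intro Q hB hM
    rw [sum_sub_distrib, hGEFF Q hB hM, sum_deltaCE, sub_self]
  · intro Q hB hM τ hτ τ' hτ' hne hΔ
    linarith [hGSYM Q hB hM τ hτ τ' hτ' hne hΔ, deltaCE_sub_Powerw_comm Den Dex p Q hτ hτ' hne hΔ]
  · intro Q Q' hB hM hB' hM' τ hτ
    linarith [hLIN Q Q' hB hM hB' hM' τ hτ, deltaCE_max_add_min Den Dex p Q Q' τ]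

/-- (Axiomatic characterization of the GCES.) If a score function `ψ` on monotone Boolean
queries satisfies DUM, G-EFF, G-SYM and LIN with respect to the PDB `p` over
`D = D^en ∪ D^ex`, then `ψ` coincides with the generalized causal-effect score on every
monotone Boolean query and every endogenous tuple; in particular such a `ψ` is unique. -/
theorem stmt7 (Den Dex : Finset ι)
    (hunion : Den ∪ Dex = Finset.univ) (hdisj : Disjoint Den Dex)
    (p : Finset ι → ℝ)
    (hp0 : ∀ W : Finset ι, 0 ≤ p W)
    (hp1 : ∑ W : Finset ι, p W = 1)
    (hexo : ∀ W : Finset ι, ¬ Dex ⊆ W → p W = 0)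
    (ψ : (Finset ι → ℝ) → ι → ℝ)
    (hDUM : ∀ Q : Finset ι → ℝ, IsBool Q → IsMonotone Q → ∀ τ ∈ Den,
      (∀ W ⊆ Den.erase τ, Delta Dex Q W τ = 0) → ψ Q τ = 0)
    (hGEFF : ∀ Q : Finset ι → ℝ, IsBool Q → IsMonotone Q →
      ∑ τ ∈ Den, ψ Q τ =
        ∑ W ∈ Den.powerset.erase Den, ∑ τ ∈ Den \ W,
          Delta Dex Q W τ * (p (W ∪ Dex) + p (W ∪ Dex ∪ {τ})))
    (hGSYM : ∀ Q : Finset ι → ℝ, IsBool Q → IsMonotone Q →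
      ∀ τ ∈ Den, ∀ τ' ∈ Den, τ ≠ τ' →
      (∀ W ⊆ Den \ {τ, τ'}, Delta Dex Q W τ = 0 ∧ Delta Dex Q W τ' = 0) →
      ψ Q τ - Powerw Den Dex p Q τ = ψ Q τ' - Powerw Den Dex p Q τ')
    (hLIN : ∀ Q Q' : Finset ι → ℝ, IsBool Q → IsMonotone Q → IsBool Q' → IsMonotone Q' →
      ∀ τ ∈ Den,
      ψ (fun W => max (Q W) (Q' W)) τ + ψ (fun W => min (Q W) (Q' W)) τ =
        ψ Q τ + ψ Q' τ) :
    ∀ Q : Finset ι → ℝ, IsBool Q → IsMonotone Q → ∀ τ ∈ Den, ψ Q τ = CE p Q τ :=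
  stmt7_general Den Dex hunion hdisj p hexo ψ hDUM hGEFF hGSYM hLIN
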